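/- The following identity between Gaussian integrals over ℝ³ × ℝ³ holds: (1/(2π))³ ∫_{ℝ⁶} e^{−(‖a‖² + ‖b‖²)/2} cosh‖a‖ · cosh‖b‖ da db = (4/3) · (1/(2π))³ ∫_{ℝ⁶} e^{−(‖a‖² + ‖b‖²)/2} cosh‖a + b‖ da db; in particular both integrals are finite. Equivalently, for 2×2 random traceless Hermitian matrices A = ∑ᵢ aᵢσᵢ, B = ∑ᵢ bᵢσᵢ with all six coefficients independent standard Gaussians, E[Tr(e^A e^B)] = (4/3) E[Tr(e^{A+B})]. -/

import Mathlib

open MeasureTheory ProbabilityTheory Real Set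
open scoped NNReal

/-!
The first integral factorises as `I₁(1)²`, where `I_v(c) = ∫_{ℝ³} e^{-‖x‖²/(2v)} cosh (c‖x‖) dx`.
In polar coordinates `I_v(c) = 4π ∫₀^∞ r² e^{-r²/(2v)} cosh (c r) dr`, and completing the square
turns the radial integral into the second moment `v + (cv)²` of the Gaussian law `N(cv, v)`.
In the second integral, the shear `(a, b) ↦ (a, a + b)` together with
`‖a‖² + ‖b‖² = ‖a + b‖² / 2 + 2 ‖a - (a + b) / 2‖²` integrates out `a` against a Gaussian of
mass `π^{3/2}`, leaving `I₂(1)`. The two integrals are `32 π³ e` and `24 π³ e`.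
-/

lemma integral_sq_gaussianReal (μ : ℝ) (v : ℝ≥0) : ∫ x, x ^ 2 ∂gaussianReal μ v = v + μ ^ 2 := by
  have h := variance_eq_sub (memLp_id_gaussianReal (μ := μ) (v := v) 2)
  simp only [Pi.pow_apply, id_eq] at h
  rw [variance_id_gaussianReal, integral_id_gaussianReal] at h
  linarith

lemma exp_neg_sq_div_add_mul_eq_mul_gaussianPDFReal {v : ℝ} (hv : 0 < v) (c x : ℝ) :
    exp (-x ^ 2 / (2 * v) + c * x) =
      √(2 * π * v) * exp (c ^ 2 * v / 2) * gaussianPDFReal (c * v) v.toNNReal x := by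
  rw [gaussianPDFReal_def, Real.coe_toNNReal _ hv.le]
  field_simp
  rw [← exp_add]
  congr 1
  field_simp
  ring

lemma integrable_sq_mul_exp_neg_sq_div_add_mul {v : ℝ} (hv : 0 < v) (c : ℝ) :
    Integrable (fun x : ℝ => x ^ 2 * exp (-x ^ 2 / (2 * v) + c * x)) := by
  have hv' : v.toNNReal ≠ 0 := by simpa using hv
  have h : Integrable (fun x : ℝ => x ^ 2) (gaussianReal (c * v) v.toNNReal) :=
    (memLp_id_gaussianReal 2).integrable_sq
  rw [gaussianReal_of_var_ne_zero _ hv', integrable_withDensity_iff_integrable_smul'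
    (measurable_gaussianPDF _ _) (.of_forall fun _ => gaussianPDF_lt_top)] at h
  simp_rw [exp_neg_sq_div_add_mul_eq_mul_gaussianPDFReal hv]
  refine (h.const_mul (√(2 * π * v) * exp (c ^ 2 * v / 2))).congr (.of_forall fun x => ?_)
  simp only [toReal_gaussianPDF, smul_eq_mul]
  ring

lemma integral_sq_mul_exp_neg_sq_div_add_mul {v : ℝ} (hv : 0 < v) (c : ℝ) :
    ∫ x : ℝ, x ^ 2 * exp (-x ^ 2 / (2 * v) + c * x) =
      √(2 * π * v) * exp (c ^ 2 * v / 2) * (v + (c * v) ^ 2) := by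
  have h := integral_sq_gaussianReal (c * v) v.toNNReal
  rw [integral_gaussianReal_eq_integral_smul (by simpa using hv), Real.coe_toNNReal _ hv.le] at h
  simp_rw [exp_neg_sq_div_add_mul_eq_mul_gaussianPDFReal hv, ← h, ← integral_const_mul, smul_eq_mul]
  congr 1 with x
  ring

lemma sq_mul_exp_neg_sq_div_mul_cosh_eq (v c x : ℝ) :
    x ^ 2 * (exp (-x ^ 2 / (2 * v)) * cosh (c * x)) =
      (x ^ 2 * exp (-x ^ 2 / (2 * v) + c * x) + x ^ 2 * exp (-x ^ 2 / (2 * v) + -c * x)) / 2 := by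
  rw [cosh_eq, exp_add, exp_add, neg_mul]
  ring

lemma integrable_sq_mul_exp_neg_sq_div_mul_cosh {v : ℝ} (hv : 0 < v) (c : ℝ) :
    Integrable (fun x : ℝ => x ^ 2 * (exp (-x ^ 2 / (2 * v)) * cosh (c * x))) := by
  simp_rw [sq_mul_exp_neg_sq_div_mul_cosh_eq]
  exact ((integrable_sq_mul_exp_neg_sq_div_add_mul hv c).add
    (integrable_sq_mul_exp_neg_sq_div_add_mul hv (-c))).div_const 2

lemma integral_sq_mul_exp_neg_sq_div_mul_cosh {v : ℝ} (hv : 0 < v) (c : ℝ) :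
    ∫ x : ℝ, x ^ 2 * (exp (-x ^ 2 / (2 * v)) * cosh (c * x)) =
      √(2 * π * v) * exp (c ^ 2 * v / 2) * (v + (c * v) ^ 2) := by
  simp_rw [sq_mul_exp_neg_sq_div_mul_cosh_eq]
  rw [integral_div, integral_add (integrable_sq_mul_exp_neg_sq_div_add_mul hv c)
    (integrable_sq_mul_exp_neg_sq_div_add_mul hv (-c)), integral_sq_mul_exp_neg_sq_div_add_mul hv,
    integral_sq_mul_exp_neg_sq_div_add_mul hv, neg_sq, neg_mul, neg_sq]
  ring

lemma integral_Ioi_sq_mul_exp_neg_sq_div_mul_cosh {v : ℝ} (hv : 0 < v) (c : ℝ) :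
    ∫ x in Ioi 0, x ^ 2 * (exp (-x ^ 2 / (2 * v)) * cosh (c * x)) =
      √(2 * π * v) / 2 * exp (c ^ 2 * v / 2) * (v + (c * v) ^ 2) := by
  have h := integral_comp_abs (f := fun x => x ^ 2 * (exp (-x ^ 2 / (2 * v)) * cosh (c * x)))
  have heven (x : ℝ) : cosh (c * |x|) = cosh (c * x) := by
    rw [← cosh_abs, abs_mul, abs_abs, ← abs_mul, cosh_abs]
  simp only [sq_abs, heven] at h
  rw [integral_sq_mul_exp_neg_sq_div_mul_cosh hv] at h
  linarith

lemma sq_norm_add_sq_norm_sub {E : Type*} [NormedAddCommGroup E] [InnerProductSpace ℝ E]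
    (x y : E) :
    ‖x‖ ^ 2 + ‖y - x‖ ^ 2 = ‖y‖ ^ 2 / 2 + 2 * ‖x - (2⁻¹ : ℝ) • y‖ ^ 2 := by
  rw [norm_sub_sq_real, norm_sub_sq_real, norm_smul, real_inner_smul_right, real_inner_comm]
  norm_num
  ring

lemma cosh_norm_add_le {E : Type*} [SeminormedAddCommGroup E] (a b : E) :
    cosh ‖a + b‖ ≤ 2 * (cosh ‖a‖ * cosh ‖b‖) := by
  have hsinh : sinh ‖a‖ * sinh ‖b‖ ≤ cosh ‖a‖ * cosh ‖b‖ :=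
    mul_le_mul (sinh_lt_cosh _).le (sinh_lt_cosh _).le (sinh_nonneg_iff.2 (norm_nonneg b))
      (cosh_pos _).le
  calc cosh ‖a + b‖ ≤ cosh (‖a‖ + ‖b‖) := by
        rw [cosh_le_cosh, abs_norm, abs_of_nonneg (by positivity)]
        exact norm_add_le a b
    _ = cosh ‖a‖ * cosh ‖b‖ + sinh ‖a‖ * sinh ‖b‖ := cosh_add _ _
    _ ≤ 2 * (cosh ‖a‖ * cosh ‖b‖) := by linarith

lemma exp_neg_sq_norm_add_sq_norm_mul_cosh_mul_cosh_eq {E : Type*} [SeminormedAddCommGroup E]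
    (p : E × E) :
    exp (-(‖p.1‖ ^ 2 + ‖p.2‖ ^ 2) / 2) * (cosh ‖p.1‖ * cosh ‖p.2‖) =
      exp (-‖p.1‖ ^ 2 / (2 * 1)) * cosh (1 * ‖p.1‖) *
        (exp (-‖p.2‖ ^ 2 / (2 * 1)) * cosh (1 * ‖p.2‖)) := by
  rw [← mul_mul_mul_comm, ← exp_add]
  ring_nf

section FiniteDimensional

variable {E : Type*} [NormedAddCommGroup E] [InnerProductSpace ℝ E] [FiniteDimensional ℝ E]
  [MeasurableSpace E] [BorelSpace E]

lemma integral_exp_neg_sq_norm_add_sq_norm_mul_comp_add (f : E → ℝ)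
    (hf : Integrable (fun p : E × E => exp (-(‖p.1‖ ^ 2 + ‖p.2‖ ^ 2) / 2) * f (p.1 + p.2))) :
    ∫ p : E × E, exp (-(‖p.1‖ ^ 2 + ‖p.2‖ ^ 2) / 2) * f (p.1 + p.2) =
      π ^ (Module.finrank ℝ E / 2 : ℝ) * ∫ y : E, exp (-‖y‖ ^ 2 / 4) * f y := by
  have hshear : MeasurePreserving (fun z : E × E => (z.1, z.2 - z.1))
      (volume.prod volume) (volume.prod volume) := measurePreserving_prod_sub volume volume
  have hemb : MeasurableEmbedding (fun z : E × E => (z.1, z.2 - z.1)) :=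
    (MeasurableEquiv.shearSubRight E).measurableEmbedding
  have hshear_apply (z : E × E) :
      exp (-(‖z.1‖ ^ 2 + ‖z.2 - z.1‖ ^ 2) / 2) * f (z.1 + (z.2 - z.1)) =
        exp (-1 * ‖z.1 - (2⁻¹ : ℝ) • z.2‖ ^ 2) * (exp (-‖z.2‖ ^ 2 / 4) * f z.2) := by
    rw [add_sub_cancel, sq_norm_add_sq_norm_sub, ← mul_assoc, ← exp_add]
    ring_nf
  rw [Measure.volume_eq_prod] at hf ⊢
  have hint := ((hshear.integrable_comp_emb hemb).2 hf).congr (.of_forall hshear_apply)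
  rw [← hshear.integral_comp hemb, integral_congr_ae (.of_forall hshear_apply),
    integral_prod_symm _ hint]
  simp only [integral_mul_const, integral_sub_right_eq_self (fun x : E => exp (-1 * ‖x‖ ^ 2)),
    GaussianFourier.integral_rexp_neg_mul_sq_norm one_pos, div_one, integral_const_mul]

variable (hE : Module.finrank ℝ E = 3)
include hE

lemma integrable_exp_neg_sq_norm_div_mul_cosh {v : ℝ} (hv : 0 < v) (c : ℝ) :
    Integrable (fun x : E => exp (-‖x‖ ^ 2 / (2 * v)) * cosh (c * ‖x‖)) := by
  have : Nontrivial E := Module.nontrivial_of_finrank_pos (R := ℝ) (by omega)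
  rw [integrable_fun_norm_addHaar volume (f := fun r => exp (-r ^ 2 / (2 * v)) * cosh (c * r)), hE]
  exact (integrable_sq_mul_exp_neg_sq_div_mul_cosh hv c).integrableOn

lemma integral_exp_neg_sq_norm_div_mul_cosh {v : ℝ} (hv : 0 < v) (c : ℝ) :
    ∫ x : E, exp (-‖x‖ ^ 2 / (2 * v)) * cosh (c * ‖x‖) =
      2 * π * √(2 * π * v) * exp (c ^ 2 * v / 2) * (v + (c * v) ^ 2) := by
  have : Nontrivial E := Module.nontrivial_of_finrank_pos (R := ℝ) (by omega)
  have hball : volume.real (Metric.ball (0 : E) 1) = π * 4 / 3 := by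
    rw [measureReal_def, InnerProductSpace.volume_ball_of_dim_odd (k := 1) hE, hE]
    norm_num
    positivity
  rw [integral_fun_norm_addHaar volume (fun r => exp (-r ^ 2 / (2 * v)) * cosh (c * r)), hE,
    hball]
  simp only [smul_eq_mul]
  norm_num [integral_Ioi_sq_mul_exp_neg_sq_div_mul_cosh hv]
  ring

lemma integrable_exp_neg_sq_norm_add_sq_norm_mul_cosh_mul_cosh :
    Integrable (fun p : E × E => exp (-(‖p.1‖ ^ 2 + ‖p.2‖ ^ 2) / 2) * (cosh ‖p.1‖ * cosh ‖p.2‖)) := by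
  have h := integrable_exp_neg_sq_norm_div_mul_cosh hE one_pos 1
  rw [Measure.volume_eq_prod]
  exact (h.mul_prod h).congr
    (.of_forall fun p => (exp_neg_sq_norm_add_sq_norm_mul_cosh_mul_cosh_eq p).symm)

lemma integral_exp_neg_sq_norm_add_sq_norm_mul_cosh_mul_cosh :
    ∫ p : E × E, exp (-(‖p.1‖ ^ 2 + ‖p.2‖ ^ 2) / 2) * (cosh ‖p.1‖ * cosh ‖p.2‖) =
      32 * π ^ 3 * exp 1 := by
  rw [integral_congr_ae (.of_forall exp_neg_sq_norm_add_sq_norm_mul_cosh_mul_cosh_eq),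
    Measure.volume_eq_prod,
    integral_prod_mul (fun x : E => exp (-‖x‖ ^ 2 / (2 * 1)) * cosh (1 * ‖x‖))
      (fun x => exp (-‖x‖ ^ 2 / (2 * 1)) * cosh (1 * ‖x‖)),
    integral_exp_neg_sq_norm_div_mul_cosh hE one_pos 1]
  have h2π : √(2 * π) * √(2 * π) = 2 * π := mul_self_sqrt (by positivity)
  have hexp : exp (1 / 2) * exp (1 / 2) = exp 1 := by rw [← exp_add]; norm_num
  simp only [mul_one, one_pow]
  linear_combination 16 * π ^ 2 * (exp (1 / 2) * exp (1 / 2) * h2π + 2 * π * hexp)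

lemma integrable_exp_neg_sq_norm_add_sq_norm_mul_cosh_add :
    Integrable (fun p : E × E => exp (-(‖p.1‖ ^ 2 + ‖p.2‖ ^ 2) / 2) * cosh ‖p.1 + p.2‖) := by
  refine ((integrable_exp_neg_sq_norm_add_sq_norm_mul_cosh_mul_cosh hE).const_mul 2).mono'
    (by fun_prop) (.of_forall fun p => ?_)
  rw [norm_of_nonneg (by positivity), mul_left_comm]
  exact mul_le_mul_of_nonneg_left (cosh_norm_add_le p.1 p.2) (exp_nonneg _)

lemma integral_exp_neg_sq_norm_add_sq_norm_mul_cosh_add :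
    ∫ p : E × E, exp (-(‖p.1‖ ^ 2 + ‖p.2‖ ^ 2) / 2) * cosh ‖p.1 + p.2‖ = 24 * π ^ 3 * exp 1 := by
  have hquarter : ∫ y : E, exp (-‖y‖ ^ 2 / 4) * cosh ‖y‖ =
      2 * π * √(2 * π * 2) * exp (1 ^ 2 * 2 / 2) * (2 + (1 * 2) ^ 2) := by
    rw [← integral_exp_neg_sq_norm_div_mul_cosh hE two_pos 1]
    norm_num
  have hsqrt : √(2 * π * 2) = 2 * √π := by
    rw [show 2 * π * 2 = 2 ^ 2 * π by ring, sqrt_mul (by norm_num), sqrt_sq (by norm_num)]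
  have hpow : π ^ ((3 : ℕ) / 2 : ℝ) = π * √π := by
    rw [sqrt_eq_rpow, ← rpow_one_add' pi_nonneg (by norm_num)]
    norm_num
  rw [integral_exp_neg_sq_norm_add_sq_norm_mul_comp_add (fun s => cosh ‖s‖)
    (integrable_exp_neg_sq_norm_add_sq_norm_mul_cosh_add hE), hE, hquarter, hsqrt, hpow]
  norm_num
  linear_combination 24 * π ^ 2 * exp 1 * mul_self_sqrt pi_nonneg

end FiniteDimensional

/-- The Gaussian-average version of the Golden–Thompson inequality for `2 × 2` traceless Hermitian
matrices `A = ∑ aᵢ σᵢ`, `B = ∑ bᵢ σᵢ` with independent standard Gaussian coefficients: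
`E [Tr (e^A e^B)] = (4/3) E [Tr (e^{A+B})]`, expressed as an identity between Gaussian integrals
over `ℝ³ × ℝ³`; in particular both integrals are finite. -/
theorem gaussian_average_golden_thompson_ratio :
    Integrable (fun p : EuclideanSpace ℝ (Fin 3) × EuclideanSpace ℝ (Fin 3) =>
      Real.exp (-(‖p.1‖ ^ 2 + ‖p.2‖ ^ 2) / 2) * (Real.cosh ‖p.1‖ * Real.cosh ‖p.2‖)) ∧
    Integrable (fun p : EuclideanSpace ℝ (Fin 3) × EuclideanSpace ℝ (Fin 3) =>
      Real.exp (-(‖p.1‖ ^ 2 + ‖p.2‖ ^ 2) / 2) * Real.cosh ‖p.1 + p.2‖) ∧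
    (1 / (2 * Real.pi)) ^ 3 *
        ∫ p : EuclideanSpace ℝ (Fin 3) × EuclideanSpace ℝ (Fin 3),
          Real.exp (-(‖p.1‖ ^ 2 + ‖p.2‖ ^ 2) / 2) * (Real.cosh ‖p.1‖ * Real.cosh ‖p.2‖) =
      (4 / 3) * ((1 / (2 * Real.pi)) ^ 3 *
        ∫ p : EuclideanSpace ℝ (Fin 3) × EuclideanSpace ℝ (Fin 3),
          Real.exp (-(‖p.1‖ ^ 2 + ‖p.2‖ ^ 2) / 2) * Real.cosh ‖p.1 + p.2‖) := by
  have hdim : Module.finrank ℝ (EuclideanSpace ℝ (Fin 3)) = 3 := finrank_euclideanSpace_fin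
  refine ⟨integrable_exp_neg_sq_norm_add_sq_norm_mul_cosh_mul_cosh hdim,
    integrable_exp_neg_sq_norm_add_sq_norm_mul_cosh_add hdim, ?_⟩
  rw [integral_exp_neg_sq_norm_add_sq_norm_mul_cosh_mul_cosh hdim,
    integral_exp_neg_sq_norm_add_sq_norm_mul_cosh_add hdim]
  ring
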